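/- arXiv:math/0703451 — 7 statements merged into one kernel-verified Lean document; each statement's English description precedes it below -/
import Mathlib

section
/- Let ψ : ℝ≥0 → ℝ be a C² convex function with ψ(1) = 0, uniformly convex on every interval [0,A] (i.e. inf_{[0,A]} ψ'' > 0), and satisfying ψ(u)/u → ∞ as u → ∞. Then there exists a constant c > 0 such that for all u ≥ 0, (u-1)² ≤ c·(1+u)·(ψ(u) - ψ(1) - ψ'(1)(u-1)). -/
open Real Filter Set

private lemma diff_deriv {ψ : ℝ → ℝ} (hC2 : ContDiffOn ℝ 2 ψ (Set.Ici 0)) {x : ℝ}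
    (hx : 0 < x) : DifferentiableAt ℝ (deriv ψ) x := by
  have h : ContDiffAt ℝ 2 ψ x := hC2.contDiffAt (Ici_mem_nhds hx)
  have h1 : ContDiffAt ℝ 1 (fderiv ℝ ψ) x := h.fderiv_right (by norm_num)
  have h2 : DifferentiableAt ℝ (fun y => fderiv ℝ ψ y 1) x :=
    (ContinuousLinearMap.apply ℝ ℝ (1:ℝ)).differentiable.differentiableAt.comp x
      (h1.differentiableAt one_ne_zero)
  have : deriv ψ = fun y => fderiv ℝ ψ y 1 := funext fun y => (fderiv_apply_one_eq_deriv).symm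
  rw [this]
  exact h2

set_option maxHeartbeats 1000000 in
theorem stmt0 (ψ : ℝ → ℝ)
    (hC2 : ContDiffOn ℝ 2 ψ (Set.Ici 0))
    (hconv : ConvexOn ℝ (Set.Ici 0) ψ)
    (hψ1 : ψ 1 = 0)
    (hunif : ∀ A > (0:ℝ), ∃ m > (0:ℝ), ∀ v ∈ Set.Icc (0:ℝ) A, m ≤ deriv (deriv ψ) v)
    (hsup : Tendsto (fun u => ψ u / u) atTop atTop) :
    ∃ c > (0:ℝ), ∀ u ≥ (0:ℝ),
      (u - 1)^2 ≤ c * (1 + u) * (ψ u - ψ 1 - deriv ψ 1 * (u - 1)) := by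
  set φ1 := deriv ψ 1 with hφ1def
  have hψdiff : ∀ x : ℝ, 0 < x → DifferentiableAt ℝ ψ x := fun x hx =>
    (hC2.differentiableOn (by norm_num) x (le_of_lt hx)).differentiableAt (Ici_mem_nhds hx)
  have hφdiff : ∀ x : ℝ, 0 < x → DifferentiableAt ℝ (deriv ψ) x := fun x hx => diff_deriv hC2 hx
  have hψcont : ContinuousOn ψ (Set.Ici 0) := hC2.continuousOn
  -- obtain M from superlinear growth
  obtain ⟨M0, hM0⟩ := (hsup.eventually (eventually_ge_atTop (|φ1| + 1))).exists_forall_of_atTop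
  set M : ℝ := max M0 2 with hMdef
  have hM2 : (2:ℝ) ≤ M := le_max_right _ _
  have hMpos : (0:ℝ) < M := by linarith
  obtain ⟨m, hm, hmle⟩ := hunif M hMpos
  -- the function g
  set g : ℝ → ℝ := fun u => ψ u - ψ 1 - φ1 * (u - 1) - m / 2 * (u - 1) ^ 2 with hgdef
  have hg1 : g 1 = 0 := by simp [hgdef]
  have hgderiv : ∀ x : ℝ, 0 < x → HasDerivAt g (deriv ψ x - φ1 - m * (x - 1)) x := by
    intro x hx
    have h1 : HasDerivAt (fun u : ℝ => φ1 * (u - 1)) (φ1 * 1) x :=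
      ((hasDerivAt_id x).sub_const 1).const_mul φ1
    have h2 : HasDerivAt (fun u : ℝ => m / 2 * (u - 1) ^ 2)
        (m / 2 * (2 * (x - 1) ^ 1 * 1)) x :=
      (((hasDerivAt_id x).sub_const 1).pow 2).const_mul (m / 2)
    have h3 := (((hψdiff x hx).hasDerivAt.sub_const (ψ 1)).sub h1).sub h2
    rw [show deriv ψ x - φ1 - m * (x - 1) = deriv ψ x - φ1 * 1 - m / 2 * (2 * (x - 1) ^ 1 * 1) by ring]
    exact h3
  -- MVT bounds on deriv g
  have hslope : ∀ a b : ℝ, 0 < a → a < b → b ≤ M →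
      ∃ η ∈ Set.Ioo a b, deriv ψ b - deriv ψ a = deriv (deriv ψ) η * (b - a) := by
    intro a b ha hab hbM
    have hcont : ContinuousOn (deriv ψ) (Set.Icc a b) := fun y hy =>
      (hφdiff y (lt_of_lt_of_le ha hy.1)).continuousAt.continuousWithinAt
    have hdiff : DifferentiableOn ℝ (deriv ψ) (Set.Ioo a b) := fun y hy =>
      (hφdiff y (lt_trans ha hy.1)).differentiableWithinAt
    obtain ⟨η, hη, heq⟩ := exists_deriv_eq_slope (deriv ψ) hab hcont hdiff
    refine ⟨η, hη, ?_⟩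
    rw [heq, div_mul_cancel₀ _ (sub_ne_zero.2 hab.ne')]
  -- g is monotone on [1, M]
  have hmono : MonotoneOn g (Set.Icc 1 M) := by
    apply monotoneOn_of_deriv_nonneg (convex_Icc 1 M)
    · exact fun x hx => (hgderiv x (by linarith [hx.1])).continuousAt.continuousWithinAt
    · intro x hx
      rw [interior_Icc] at hx
      exact (hgderiv x (by linarith [hx.1])).differentiableAt.differentiableWithinAt
    · intro x hx
      rw [interior_Icc] at hx
      rw [(hgderiv x (by linarith [hx.1])).deriv]
      obtain ⟨η, hη, heq⟩ := hslope 1 x one_pos hx.1 hx.2.le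
      have hmη : m ≤ deriv (deriv ψ) η := hmle η ⟨by linarith [hη.1], by linarith [hη.2, hx.2]⟩
      rw [show deriv ψ x - φ1 = deriv ψ x - deriv ψ 1 from rfl, heq]
      nlinarith [hη.1, hx.1]
  -- g is antitone on [0, 1]
  have hanti : AntitoneOn g (Set.Icc 0 1) := by
    apply antitoneOn_of_deriv_nonpos (convex_Icc 0 1)
    · apply ContinuousOn.sub
      apply ContinuousOn.sub
      apply ContinuousOn.sub
      · exact hψcont.mono (fun x hx => hx.1)
      · exact continuousOn_const
      · exact (Continuous.continuousOn (by continuity))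
      · exact (Continuous.continuousOn (by continuity))
    · intro x hx
      rw [interior_Icc] at hx
      exact (hgderiv x hx.1).differentiableAt.differentiableWithinAt
    · intro x hx
      rw [interior_Icc] at hx
      rw [(hgderiv x hx.1).deriv]
      obtain ⟨η, hη, heq⟩ := hslope x 1 hx.1 hx.2 (by linarith)
      have hmη : m ≤ deriv (deriv ψ) η := hmle η ⟨by linarith [hη.1, hx.1], by linarith [hη.2]⟩
      have h5 : deriv ψ x - φ1 = -(deriv (deriv ψ) η * (1 - x)) := by
        linarith [heq, hφ1def.le, hφ1def.ge]
      rw [h5]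
      nlinarith [hη.2, hx.2]
  -- key Taylor bound on [0, M]
  have key : ∀ u ∈ Set.Icc (0:ℝ) M, m / 2 * (u - 1) ^ 2 ≤ ψ u - ψ 1 - φ1 * (u - 1) := by
    intro u hu
    have h0 : 0 ≤ g u := by
      rcases le_total u 1 with h | h
      · have := hanti ⟨hu.1, h⟩ ⟨zero_le_one, le_refl 1⟩ h
        rw [hg1] at this; linarith
      · have := hmono ⟨le_refl 1, by linarith⟩ ⟨h, hu.2⟩ h
        rw [hg1] at this; linarith
    simp only [hgdef] at h0
    linarith
  have hMM0 : M0 ≤ M := le_max_left _ _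
  clear_value φ1 M g
  -- the constant
  obtain ⟨c, hc2m, hc1⟩ : ∃ c : ℝ, 2 / m ≤ c ∧ 1 ≤ c :=
    ⟨max (2 / m) 1, le_max_left _ _, le_max_right _ _⟩
  have hc0 : (0:ℝ) < c := by linarith
  have hcm : 2 ≤ c * m := by
    rw [div_le_iff₀ hm] at hc2m
    linarith
  refine ⟨c, hc0, ?_⟩
  intro u hu
  by_cases hcase : u ≤ M
  · have hk := key u ⟨hu, hcase⟩
    have hB : 0 ≤ ψ u - ψ 1 - φ1 * (u - 1) := le_trans (by positivity) hk
    nlinarith [mul_nonneg (mul_nonneg hc0.le hu) hB, mul_le_mul_of_nonneg_left hk hc0.le,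
      mul_le_mul_of_nonneg_right hcm (sq_nonneg (u - 1))]
  · push_neg at hcase
    have hu2 : (2:ℝ) ≤ u := le_trans hM2 hcase.le
    have hupos : (0:ℝ) < u := by linarith
    have hψu : (|φ1| + 1) * u ≤ ψ u := by
      have h1 := hM0 u (le_trans hMM0 hcase.le)
      exact (le_div_iff₀ hupos).1 h1
    have hφu : φ1 * (u - 1) ≤ |φ1| * (u - 1) :=
      mul_le_mul_of_nonneg_right (le_abs_self φ1) (by linarith)
    have hBu : u ≤ ψ u - ψ 1 - φ1 * (u - 1) := by
      nlinarith [abs_nonneg φ1, hψ1.le, hψ1.ge]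
    have hB0 : (0:ℝ) ≤ ψ u - ψ 1 - φ1 * (u - 1) := by linarith
    nlinarith [mul_nonneg (mul_nonneg (sub_nonneg.2 hc1) (by linarith : (0:ℝ) ≤ 1 + u)) hB0,
      mul_nonneg (by linarith : (0:ℝ) ≤ 1 + u) (sub_nonneg.2 hBu)]
end

section
/- Let ψ : ℝ≥0 → ℝ be a C² convex function with ψ(1) = 0, uniformly convex on each [0,A], and ψ(u)/u → ∞ as u → ∞. Then there exists c_ψ > 0 such that for any two probability measures P, Q on a measurable space with Q absolutely continuous with respect to P with density h = dQ/dP, one has ∫ |h - 1| dP ≤ c_ψ · √(∫ ψ(h) dP). -/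
open Real Filter Set MeasureTheory

set_option maxHeartbeats 1000000

theorem stmt1 (ψ : ℝ → ℝ)
    (hC2 : ContDiffOn ℝ 2 ψ (Set.Ici 0))
    (hconv : ConvexOn ℝ (Set.Ici 0) ψ)
    (hψ1 : ψ 1 = 0)
    (hunif : ∀ A > (0:ℝ), ∃ m > (0:ℝ), ∀ v ∈ Set.Icc (0:ℝ) A, m ≤ deriv (deriv ψ) v)
    (hsup : Tendsto (fun u => ψ u / u) atTop atTop) :
    ∃ c > (0:ℝ), ∀ (α : Type) (_ : MeasurableSpace α) (P : Measure α),
      IsProbabilityMeasure P → ∀ h : α → ℝ, Measurable h → (∀ x, 0 ≤ h x) →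
      (∫ x, h x ∂P) = 1 → Integrable h P → Integrable (fun x => ψ (h x)) P →
      ∫ x, |h x - 1| ∂P ≤ c * Real.sqrt (∫ x, ψ (h x) ∂P) := by
  -- ψ is C² on the open half line
  have hC2' : ContDiffOn ℝ 2 ψ (Set.Ioi 0) := hC2.mono Ioi_subset_Ici_self
  have hψdiff : ∀ u ∈ Set.Ioi (0:ℝ), DifferentiableAt ℝ ψ u := by
    intro u hu
    exact ((hC2'.contDiffAt (isOpen_Ioi.mem_nhds hu)).differentiableAt (by norm_num))
  have hψ'C1 : ContDiffOn ℝ 1 (deriv ψ) (Set.Ioi 0) :=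
    hC2'.deriv_of_isOpen isOpen_Ioi (by norm_num)
  have hψ'diff : ∀ u ∈ Set.Ioi (0:ℝ), DifferentiableAt ℝ (deriv ψ) u := by
    intro u hu
    exact ((hψ'C1.contDiffAt (isOpen_Ioi.mem_nhds hu)).differentiableAt (by norm_num))
  set L := deriv ψ 1 with hL
  clear_value L
  set φ : ℝ → ℝ := fun u => ψ u - L * (u - 1) with hφdef
  clear_value φ
  -- threshold A from superlinearity
  obtain ⟨A0, hA0⟩ := (tendsto_atTop.mp hsup (|L| + 2)).exists_forall_of_atTop
  set A : ℝ := max A0 2 with hA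
  clear_value A
  have hA2 : (2:ℝ) ≤ A := by rw [hA]; exact le_max_right _ _
  have hApos : (0:ℝ) < A := by linarith
  obtain ⟨m, hm, hmle⟩ := hunif A hApos
  set c0 : ℝ := max (2 / m) 1 with hc0
  clear_value c0
  have hc0one : (1:ℝ) ≤ c0 := by rw [hc0]; exact le_max_right _ _
  have hc0m : 2 / m ≤ c0 := by rw [hc0]; exact le_max_left _ _
  have hc0pos : (0:ℝ) < c0 := lt_of_lt_of_le one_pos hc0one
  -- the auxiliary function g and its derivative
  set g : ℝ → ℝ := fun u => ψ u - (L * (u - 1) + m / 2 * (u - 1) ^ 2) with hgdef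
  clear_value g
  have hq : ∀ u : ℝ, HasDerivAt (fun v : ℝ => L * (v - 1) + m / 2 * (v - 1) ^ 2)
      (L + m * (u - 1)) u := by
    intro u
    have h1 : HasDerivAt (fun v : ℝ => v - 1) 1 u := (hasDerivAt_id u).sub_const 1
    have h2 := (h1.pow 2).const_mul (m / 2)
    have h3 := (h1.const_mul L).add h2
    exact h3.congr_deriv (by rw [show (2:ℕ) - 1 = 1 from rfl]; push_cast; ring)
  have hg_hasderiv : ∀ u ∈ Set.Ioi (0:ℝ),
      HasDerivAt g (deriv ψ u - (L + m * (u - 1))) u := by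
    intro u hu
    rw [hgdef]
    exact (hψdiff u hu).hasDerivAt.sub (hq u)
  have hgderiv_eq : ∀ u ∈ Set.Ioi (0:ℝ), deriv g u = deriv ψ u - (L + m * (u - 1)) := by
    intro u hu
    exact (hg_hasderiv u hu).deriv
  have hG : ∀ u ∈ Set.Ioi (0:ℝ),
      HasDerivAt (fun v => deriv ψ v - (L + m * (v - 1))) (deriv (deriv ψ) u - m) u := by
    intro u hu
    have h1 : HasDerivAt (fun v : ℝ => L + m * (v - 1)) m u := by
      have := (((hasDerivAt_id u).sub_const 1).const_mul m).const_add L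
      simpa using this
    exact (hψ'diff u hu).hasDerivAt.sub h1
  have hgd_eventually : ∀ u ∈ Set.Ioi (0:ℝ),
      deriv g =ᶠ[nhds u] fun v => deriv ψ v - (L + m * (v - 1)) := by
    intro u hu
    filter_upwards [isOpen_Ioi.mem_nhds hu] with v hv
    exact hgderiv_eq v hv
  -- convexity of g on [0, A]
  have hIccsub : Set.Icc (0:ℝ) A ⊆ Set.Ici 0 := fun x hx => hx.1
  have hgcont : ContinuousOn g (Set.Icc 0 A) := by
    rw [hgdef]
    apply ContinuousOn.sub (hC2.continuousOn.mono hIccsub)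
    exact Continuous.continuousOn (by fun_prop)
  have hintIcc : interior (Set.Icc (0:ℝ) A) = Set.Ioo 0 A := interior_Icc
  have hgconv : ConvexOn ℝ (Set.Icc 0 A) g := by
    apply convexOn_of_deriv2_nonneg (convex_Icc 0 A) hgcont
    · rw [hintIcc]
      intro u hu
      exact ((hg_hasderiv u hu.1).differentiableAt).differentiableWithinAt
    · rw [hintIcc]
      intro u hu
      have := ((hG u hu.1).differentiableAt.congr_of_eventuallyEq
        (hgd_eventually u hu.1))
      exact this.differentiableWithinAt
    · rw [hintIcc]
      intro u hu
      have heq : deriv (deriv g) u = deriv (deriv ψ) u - m := by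
        rw [Filter.EventuallyEq.deriv_eq (hgd_eventually u hu.1)]
        exact (hG u hu.1).deriv
      have : (deriv^[2]) g u = deriv (deriv g) u := by
        simp [Function.iterate_succ, Function.iterate_one]
      rw [this, heq]
      have := hmle u ⟨hu.1.le, hu.2.le⟩
      linarith
  -- tangent line at 1 : g ≥ 0 on [0, A]
  have h1Ioi : (1:ℝ) ∈ Set.Ioi (0:ℝ) := by norm_num
  have h1mem : (1:ℝ) ∈ Set.Icc (0:ℝ) A := ⟨by norm_num, by linarith⟩
  have hdiffg1 : DifferentiableAt ℝ g 1 := (hg_hasderiv 1 h1Ioi).differentiableAt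
  have hg1 : g 1 = 0 := by simp [hgdef, hψ1]
  have hdg1 : deriv g 1 = 0 := by
    rw [hgderiv_eq 1 h1Ioi, ← hL]; ring
  have hgnonneg : ∀ u ∈ Set.Icc (0:ℝ) A, 0 ≤ g u := by
    intro u hu
    rcases lt_trichotomy u 1 with hu1 | hu1 | hu1
    · have hs := hgconv.slope_le_deriv hu h1mem hu1 hdiffg1
      rw [hdg1, slope_def_field, hg1] at hs
      have h10 : (0:ℝ) < 1 - u := by linarith
      have := (div_le_iff₀ h10).mp hs
      linarith
    · rw [hu1, hg1]
    · have hs := hgconv.deriv_le_slope h1mem hu hu1 hdiffg1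
      rw [hdg1, slope_def_field, hg1] at hs
      have h10 : (0:ℝ) < u - 1 := by linarith
      have := (le_div_iff₀ h10).mp hs
      linarith
  -- the key pointwise inequality
  have hφbig : ∀ u : ℝ, A ≤ u → 2 * u ≤ φ u := by
    intro u hu
    have hu2 : (2:ℝ) ≤ u := le_trans hA2 hu
    have h1 := hA0 u (le_trans (by rw [hA]; exact le_max_left _ _ : A0 ≤ A) hu)
    have hupos : (0:ℝ) < u := by linarith
    have hψu : (|L| + 2) * u ≤ ψ u := by
      rw [← le_div_iff₀ hupos]
      exact h1
    have hLabs : L * (u - 1) ≤ |L| * u := by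
      have h1 : L * (u - 1) ≤ |L| * (u - 1) :=
        mul_le_mul_of_nonneg_right (le_abs_self L) (by linarith)
      have h2 : |L| * (u - 1) ≤ |L| * u :=
        mul_le_mul_of_nonneg_left (by linarith) (abs_nonneg L)
      linarith
    simp only [hφdef]
    nlinarith [abs_nonneg L]
  have hφnonneg : ∀ u : ℝ, 0 ≤ u → 0 ≤ φ u := by
    intro u hu
    rcases le_or_gt u A with huA | huA
    · have := hgnonneg u ⟨hu, huA⟩
      simp only [hgdef] at this
      simp only [hφdef]
      nlinarith [sq_nonneg (u - 1), hm.le]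
    · have := hφbig u huA.le
      linarith
  have hkey : ∀ u : ℝ, 0 ≤ u → (u - 1) ^ 2 ≤ c0 * ((1 + u) * φ u) := by
    intro u hu
    rcases le_or_gt u A with huA | huA
    · have hg0 := hgnonneg u ⟨hu, huA⟩
      simp only [hgdef] at hg0
      have hφge : m / 2 * (u - 1) ^ 2 ≤ φ u := by simp only [hφdef]; linarith
      have h0 : m * (u - 1) ^ 2 ≤ 2 * φ u := by linarith
      have h1 : (u - 1) ^ 2 ≤ 2 / m * φ u := by
        rw [div_mul_eq_mul_div, le_div_iff₀ hm]
        linarith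
      have h2 : 2 / m * φ u ≤ c0 * φ u :=
        mul_le_mul_of_nonneg_right hc0m (hφnonneg u hu)
      have h3 : c0 * φ u ≤ c0 * ((1 + u) * φ u) := by
        have : φ u ≤ (1 + u) * φ u := by
          nlinarith [mul_nonneg hu (hφnonneg u hu)]
        exact mul_le_mul_of_nonneg_left this hc0pos.le
      linarith
    · have hu2 : (2:ℝ) ≤ u := le_trans hA2 huA.le
      have hb := hφbig u huA.le
      have h1 : (u - 1) ^ 2 ≤ (1 + u) * (2 * u) := by nlinarith
      have h2 : (1 + u) * (2 * u) ≤ (1 + u) * φ u :=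
        mul_le_mul_of_nonneg_left hb (by linarith)
      have h3 : (1 + u) * φ u ≤ c0 * ((1 + u) * φ u) := by
        nlinarith [mul_nonneg (by linarith : (0:ℝ) ≤ 1 + u) (hφnonneg u (by linarith))]
      linarith
  -- choose the constant
  refine ⟨Real.sqrt (2 * c0), Real.sqrt_pos.mpr (by linarith), ?_⟩
  intro α mα P hP h hmeas hpos hint1 hinth hintψ
  set I : ℝ := ∫ x, ψ (h x) ∂P with hIdef
  clear_value I
  -- integrability facts
  have hinth1 : Integrable (fun x => h x - 1) P := hinth.sub (integrable_const 1)
  have hintabs : Integrable (fun x => |h x - 1|) P := hinth1.abs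
  have hintφ : Integrable (fun x => φ (h x)) P := by
    rw [hφdef]; exact hintψ.sub (hinth1.const_mul L)
  have hinth10 : (∫ x, (h x - 1) ∂P) = 0 := by
    rw [integral_sub hinth (integrable_const 1)]
    simp [hint1]
  have hIφ : (∫ x, φ (h x) ∂P) = I := by
    simp only [hφdef]
    rw [integral_sub hintψ (hinth1.const_mul L), integral_const_mul, hinth10, ← hIdef]
    ring
  have hI0 : 0 ≤ I := by
    rw [← hIφ]
    exact integral_nonneg fun x => hφnonneg (h x) (hpos x)
  -- the bound for each t > 0
  have hbound : ∀ t : ℝ, 0 < t → (∫ x, |h x - 1| ∂P) ≤ t * c0 + I / (2 * t) := by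
    intro t ht
    have hptwise : ∀ x, |h x - 1| ≤ t * c0 / 2 * (1 + h x) + 1 / (2 * t) * φ (h x) := by
      intro x
      set u := h x with hu
      have hu0 : 0 ≤ u := hpos x
      set a := t * c0 * (1 + u) with ha
      set b := φ u / t with hb
      have ha0 : 0 ≤ a := by positivity
      have hb0 : 0 ≤ b := div_nonneg (hφnonneg u hu0) ht.le
      have hab : (u - 1) ^ 2 ≤ a * b := by
        have : a * b = c0 * ((1 + u) * φ u) := by
          rw [ha, hb]; field_simp
        rw [this]
        exact hkey u hu0
      have h1 : |u - 1| = Real.sqrt ((u - 1) ^ 2) := (Real.sqrt_sq_eq_abs _).symm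
      have h2 : Real.sqrt ((u - 1) ^ 2) ≤ Real.sqrt (a * b) := Real.sqrt_le_sqrt hab
      have h3 : Real.sqrt (a * b) ≤ (a + b) / 2 := by
        have h4 : a * b ≤ ((a + b) / 2) ^ 2 := by nlinarith [sq_nonneg (a - b)]
        calc Real.sqrt (a * b) ≤ Real.sqrt (((a + b) / 2) ^ 2) := Real.sqrt_le_sqrt h4
        _ = (a + b) / 2 := Real.sqrt_sq (by positivity)
      have : |u - 1| ≤ (a + b) / 2 := by rw [h1]; linarith
      calc |u - 1| ≤ (a + b) / 2 := this
      _ = t * c0 / 2 * (1 + u) + 1 / (2 * t) * φ u := by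
        rw [ha, hb]; field_simp
    have hIadd : Integrable (fun x => 1 + h x) P := (integrable_const 1).add hinth
    have hia : Integrable (fun x => t * c0 / 2 * (1 + h x)) P := hIadd.const_mul _
    have hib : Integrable (fun x => 1 / (2 * t) * φ (h x)) P := hintφ.const_mul _
    have hintrhs : Integrable (fun x => t * c0 / 2 * (1 + h x) + 1 / (2 * t) * φ (h x)) P :=
      hia.add hib
    have hmono := integral_mono hintabs hintrhs hptwise
    have e0 : (∫ x, (1 + h x) ∂P) = 2 := by
      rw [integral_add (integrable_const 1) hinth, hint1]
      simp
      norm_num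
    have e1 : (∫ x, (t * c0 / 2 * (1 + h x) + 1 / (2 * t) * φ (h x)) ∂P)
        = t * c0 / 2 * 2 + 1 / (2 * t) * I := by
      rw [integral_add hia hib, integral_const_mul, integral_const_mul, e0, hIφ]
    rw [e1] at hmono
    calc (∫ x, |h x - 1| ∂P) ≤ t * c0 / 2 * 2 + 1 / (2 * t) * I := hmono
    _ = t * c0 + I / (2 * t) := by field_simp; try ring
  -- conclude
  rcases eq_or_lt_of_le hI0 with hIz | hIpos
  · have hle0 : (∫ x, |h x - 1| ∂P) ≤ 0 := by
      apply le_of_forall_pos_le_add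
      intro ε hε
      have hb := hbound (ε / c0) (by positivity)
      rw [← hIz] at hb
      have h2 : ε / c0 * c0 + (0:ℝ) / (2 * (ε / c0)) = ε := by
        rw [zero_div, add_zero, div_mul_cancel₀]
        exact ne_of_gt hc0pos
      calc (∫ x, |h x - 1| ∂P) ≤ ε / c0 * c0 + (0:ℝ) / (2 * (ε / c0)) := hb
      _ = ε := h2
      _ ≤ 0 + ε := by linarith
    have : 0 ≤ Real.sqrt (2 * c0) * Real.sqrt I := by positivity
    calc (∫ x, |h x - 1| ∂P) ≤ 0 := hle0
    _ ≤ Real.sqrt (2 * c0) * Real.sqrt I := this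
  · have hsI : Real.sqrt I ^ 2 = I := Real.sq_sqrt hI0
    have hsc : Real.sqrt (2 * c0) ^ 2 = 2 * c0 := Real.sq_sqrt (by linarith)
    have hsIpos : 0 < Real.sqrt I := Real.sqrt_pos.mpr hIpos
    have hscpos : 0 < Real.sqrt (2 * c0) := Real.sqrt_pos.mpr (by linarith)
    obtain ⟨s, hs⟩ : ∃ s, Real.sqrt I = s := ⟨_, rfl⟩
    obtain ⟨r, hr⟩ : ∃ r, Real.sqrt (2 * c0) = r := ⟨_, rfl⟩
    rw [hs] at hsI hsIpos
    rw [hr] at hsc hscpos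
    rw [hs, hr]
    have ht : 0 < s / r := by positivity
    calc (∫ x, |h x - 1| ∂P) ≤ s / r * c0 + I / (2 * (s / r)) := hbound _ ht
    _ = r * s := by
      field_simp
      nlinarith [hsI, hsc, hsIpos, hscpos]
end

section
/- Suppose I : [0,∞) → [0,∞) is differentiable with I'(t) ≤ -(1/β(s))·I(t) + (s/β(s))·G for all t ≥ 0 and all s > 0, where β : (0,∞) → (0,∞) is non-increasing and G ≥ 0, I(0) ≥ 0. Then for all t > 0, I(t) ≤ ξ(t)·(I(0) + G), where ξ(t) = inf{s > 0 : β(s)·log(1/s) ≤ t} (with the convention inf ∅ = +∞, and assuming the infimum is attained or approached). -/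
open Real

theorem stmt9 (I I' β : ℝ → ℝ) (G : ℝ)
    (hβpos : ∀ s > (0:ℝ), 0 < β s)
    (hβmono : ∀ s1 s2 : ℝ, 0 < s1 → s1 ≤ s2 → β s2 ≤ β s1)
    (hG : 0 ≤ G) (hI : ∀ t, 0 ≤ I t)
    (hderiv : ∀ t ≥ (0:ℝ), HasDerivAt I (I' t) t)
    (hineq : ∀ t ≥ (0:ℝ), ∀ s > (0:ℝ), I' t ≤ -(1 / β s) * I t + (s / β s) * G) :
    ∀ t > (0:ℝ),
      I t ≤ (sInf {s : ℝ | 0 < s ∧ β s * Real.log (1/s) ≤ t}) * (I 0 + G) := by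
  intro t ht
  -- Gronwall step: for each s in the set, I t ≤ s * (I 0 + G)
  have gron : ∀ s : ℝ, 0 < s → β s * Real.log (1/s) ≤ t → I t ≤ s * (I 0 + G) := by
    intro s hs hst
    set b := β s with hbdef
    have hb : 0 < b := hβpos s hs
    set J : ℝ → ℝ := fun x => Real.exp (x / b) * (I x - s * G) with hJ
    have hJderiv : ∀ x : ℝ, 0 ≤ x →
        HasDerivAt J (Real.exp (x / b) * (1 / b) * (I x - s * G)
          + Real.exp (x / b) * I' x) x := by
      intro x hx
      have h1 : HasDerivAt (fun y : ℝ => Real.exp (y / b)) (Real.exp (x / b) * (1 / b)) x := by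
        have := ((hasDerivAt_id x).div_const b).exp
        simpa using this
      have h2 : HasDerivAt (fun y => I y - s * G) (I' x) x :=
        (hderiv x hx).sub_const _
      exact h1.mul h2
    have hanti : AntitoneOn J (Set.Icc 0 t) := by
      apply antitoneOn_of_deriv_nonpos (convex_Icc 0 t)
      · intro x hx
        exact (hJderiv x hx.1).continuousAt.continuousWithinAt
      · intro x hx
        rw [interior_Icc] at hx
        exact (hJderiv x hx.1.le).differentiableAt.differentiableWithinAt
      · intro x hx
        rw [interior_Icc] at hx
        rw [(hJderiv x hx.1.le).deriv]
        have hi := hineq x hx.1.le s hs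
        have hE : 0 < Real.exp (x / b) := Real.exp_pos _
        have : (1 / b) * (I x - s * G) + I' x ≤ 0 := by
          have : -(1 / b) * I x + (s / b) * G = -((1 / b) * (I x - s * G)) := by
            field_simp; ring
          nlinarith [hi]
        nlinarith [this, hE]
    have hJt : J t ≤ J 0 :=
      hanti (Set.left_mem_Icc.2 ht.le) (Set.right_mem_Icc.2 ht.le) ht.le
    have hJ0 : J 0 = I 0 - s * G := by simp [hJ]
    have hkey : Real.exp (t / b) * (I t - s * G) ≤ I 0 - s * G := by
      rw [← hJ0]; exact hJt
    -- exp (-(t/b)) ≤ s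
    have hlog : -Real.log s ≤ t / b := by
      rw [one_div, Real.log_inv] at hst
      rw [le_div_iff₀ hb]
      nlinarith [hst]
    have hexp : Real.exp (-(t / b)) ≤ s := by
      calc Real.exp (-(t / b)) ≤ Real.exp (Real.log s) := by
            apply Real.exp_le_exp.2; linarith
        _ = s := Real.exp_log hs
    have hE : 0 < Real.exp (t / b) := Real.exp_pos _
    have h1 : 1 ≤ s * Real.exp (t / b) := by
      rw [Real.exp_neg] at hexp
      have := mul_le_mul_of_nonneg_right hexp hE.le
      rwa [inv_mul_cancel₀ (ne_of_gt hE)] at this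
    have hI0 : 0 ≤ I 0 := hI 0
    have hIt : 0 ≤ I t := hI t
    nlinarith [hkey, mul_nonneg (sub_nonneg.2 h1) hI0, mul_nonneg hs.le hG, hE,
      mul_nonneg hs.le hI0]
  set S : Set ℝ := {s : ℝ | 0 < s ∧ β s * Real.log (1/s) ≤ t} with hS
  have h1S : (1:ℝ) ∈ S := by
    constructor
    · norm_num
    · simp [ht.le]
  have hSne : S.Nonempty := ⟨1, h1S⟩
  have hc : 0 ≤ I 0 + G := by linarith [hI 0]
  rcases eq_or_lt_of_le hc with hc0 | hc0
  · have := gron 1 one_pos (by simpa using ht.le)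
    have hIt0 : I t ≤ 0 := by linarith
    calc I t ≤ 0 := hIt0
      _ = sInf S * (I 0 + G) := by rw [← hc0]; ring
  · have hle : I t / (I 0 + G) ≤ sInf S := by
      apply le_csInf hSne
      intro s hsS
      rw [div_le_iff₀ hc0]
      exact gron s hsS.1 hsS.2
    calc I t = (I t / (I 0 + G)) * (I 0 + G) := by field_simp
      _ ≤ sInf S * (I 0 + G) := mul_le_mul_of_nonneg_right hle hc
end

section
/- Let ψ be C² with ψ''(1) > 0, and suppose μ satisfies the I_ψ-inequality ∫ψ(h)dμ ≤ C_ψ ∫ψ''(h)Γ(h)dμ for all nice probability densities h, where Γ is a bilinear carré du champ with Γ(1+εg) = ε²Γ(g). Then μ satisfies the Poincaré inequality Var_μ(g) ≤ 2C_ψ ∫Γ(g)dμ for all bounded nice g with ∫g dμ = 0. -/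
open Real MeasureTheory

-- Taylor-type estimate at 1 for a C² function
lemma taylor_est (ψ : ℝ → ℝ) (hψ : ContDiff ℝ 2 ψ) {δ : ℝ} (hδ : 0 < δ) :
    ∃ η > 0, ∀ s : ℝ, |s| ≤ η →
      |ψ (1+s) - ψ 1 - deriv ψ 1 * s - deriv (deriv ψ) 1 * s^2 / 2| ≤ δ * s^2 ∧
      |deriv (deriv ψ) (1+s) - deriv (deriv ψ) 1| ≤ δ := by
  have h2 : ContDiff ℝ (1+1) ψ := by norm_num; exact hψ
  have hd1 : Differentiable ℝ ψ := (contDiff_succ_iff_deriv.mp h2).1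
  have hder : ContDiff ℝ 1 (deriv ψ) := (contDiff_succ_iff_deriv.mp h2).2.2
  have hd2 : Differentiable ℝ (deriv ψ) := hder.differentiable one_ne_zero
  have hc2 : Continuous (deriv (deriv ψ)) := hder.continuous_deriv le_rfl
  -- continuity of ψ'' at 1
  have hcont := Metric.continuous_iff.mp hc2 1 δ hδ
  obtain ⟨η, hη, hball⟩ := hcont
  refine ⟨η/2, by positivity, fun s hs => ?_⟩
  have hb : ∀ t : ℝ, |t| ≤ η/2 → |deriv (deriv ψ) (1+t) - deriv (deriv ψ) 1| ≤ δ := by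
    intro t ht
    have : dist (1+t) 1 < η := by
      simp [Real.dist_eq, abs_of_nonneg]
      linarith [abs_nonneg t]
    have := hball (1+t) this
    rw [Real.dist_eq] at this
    linarith [le_of_lt this]
  refine ⟨?_, hb s hs⟩
  set c := deriv (deriv ψ) 1 with hc
  set a := deriv ψ 1 with ha
  set ρ : ℝ → ℝ := fun t => ψ (1+t) - ψ 1 - a * t - c * t^2 / 2 with hρ
  set ρ' : ℝ → ℝ := fun t => deriv ψ (1+t) - a - c * t with hρ'
  have hDρ : ∀ t : ℝ, HasDerivAt ρ (ρ' t) t := by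
    intro t
    have h1 : HasDerivAt (fun t : ℝ => 1 + t) 1 t := (hasDerivAt_id t).const_add 1
    have h2 : HasDerivAt (fun t : ℝ => ψ (1+t)) (deriv ψ (1+t) * 1) t :=
      (hd1.differentiableAt.hasDerivAt.comp t h1)
    have h3 : HasDerivAt (fun t : ℝ => ψ 1 + a * t + c * t^2 / 2) (a + c * t) t := by
      have hsq : HasDerivAt (fun t : ℝ => c * t^2 / 2) (c * t) t := by
        have := ((hasDerivAt_pow 2 t).const_mul c).div_const 2
        refine this.congr_deriv ?_
        all_goals (push_cast; ring)
      have h4 : HasDerivAt (fun t : ℝ => ψ 1 + a * t) a t := by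
        simpa using ((hasDerivAt_id t).const_mul a).const_add (ψ 1)
      have := h4.add hsq
      refine this.congr_deriv ?_
      all_goals ring
    have heq : ρ = fun u => ψ (1+u) - (ψ 1 + a * u + c * u^2 / 2) := by
      ext u; simp only [ρ]; ring
    have heq' : ρ' t = deriv ψ (1+t) * 1 - (a + c * t) := by simp only [ρ']; ring
    rw [heq, heq']
    exact h2.sub h3
  have hDρ' : ∀ t : ℝ, HasDerivAt ρ' (deriv (deriv ψ) (1+t) - c) t := by
    intro t
    have h1 : HasDerivAt (fun t : ℝ => 1 + t) 1 t := (hasDerivAt_id t).const_add 1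
    have h2 : HasDerivAt (fun t : ℝ => deriv ψ (1+t)) (deriv (deriv ψ) (1+t) * 1) t :=
      (hd2.differentiableAt.hasDerivAt.comp t h1)
    have h3 : HasDerivAt (fun t : ℝ => a + c * t) c t := by
      simpa using ((hasDerivAt_id t).const_mul c).const_add a
    have heq' : deriv (deriv ψ) (1+t) - c = deriv (deriv ψ) (1+t) * 1 - c := by ring
    have heq : ρ' = fun u => deriv ψ (1+u) - (a + c * u) := by
      ext u; simp only [ρ']; ring
    rw [heq, heq']
    exact h2.sub h3
  -- step 1 : |ρ' t| ≤ δ * |t| for |t| ≤ η/2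
  have step1 : ∀ t : ℝ, |t| ≤ η/2 → |ρ' t| ≤ δ * |t| := by
    intro t ht
    have hconv : Convex ℝ (Set.uIcc (0:ℝ) t) := convex_uIcc 0 t
    have hmem : ∀ u ∈ Set.uIcc (0:ℝ) t, |u| ≤ η/2 := by
      intro u hu
      rw [Set.uIcc_eq_union] at hu
      rcases hu with hu | hu <;> rcases hu with ⟨h1, h2⟩ <;> rw [abs_le] <;>
        constructor <;> nlinarith [abs_le.mp ht, abs_nonneg t]
    have := hconv.norm_image_sub_le_of_norm_hasDerivWithin_le
      (f := ρ') (f' := fun u => deriv (deriv ψ) (1+u) - c)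
      (fun u _ => (hDρ' u).hasDerivWithinAt)
      (fun u hu => hb u (hmem u hu)) (Set.left_mem_uIcc) (Set.right_mem_uIcc)
    have hρ'0 : ρ' 0 = 0 := by simp [ρ', ha]
    simpa [hρ'0, Real.norm_eq_abs] using this
  -- step 2 : |ρ s| ≤ δ * s^2
  have hconv : Convex ℝ (Set.uIcc (0:ℝ) s) := convex_uIcc 0 s
  have hmem : ∀ u ∈ Set.uIcc (0:ℝ) s, |u| ≤ η/2 := by
    intro u hu
    rw [Set.uIcc_eq_union] at hu
    rcases hu with hu | hu <;> rcases hu with ⟨h1, h2⟩ <;> rw [abs_le] <;>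
      constructor <;> nlinarith [abs_le.mp hs, abs_nonneg s]
  have hmem' : ∀ u ∈ Set.uIcc (0:ℝ) s, |u| ≤ |s| := by
    intro u hu
    rw [Set.uIcc_eq_union] at hu
    rcases hu with hu | hu <;> rcases hu with ⟨h1, h2⟩ <;> rw [abs_le] <;>
      constructor <;> nlinarith [abs_nonneg s, neg_abs_le s, le_abs_self s]
  have step2 := hconv.norm_image_sub_le_of_norm_hasDerivWithin_le
    (f := ρ) (f' := ρ')
    (fun u _ => (hDρ u).hasDerivWithinAt)
    (fun u hu => by
      calc ‖ρ' u‖ ≤ δ * |u| := step1 u (hmem u hu)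
      _ ≤ δ * |s| := by nlinarith [hmem' u hu, abs_nonneg u])
    (Set.left_mem_uIcc) (Set.right_mem_uIcc)
  have hρ0 : ρ 0 = 0 := by simp [ρ]
  have : |ρ s| ≤ δ * |s| * |s| := by simpa [hρ0, Real.norm_eq_abs] using step2
  calc |ψ (1+s) - ψ 1 - a * s - c * s^2 / 2| = |ρ s| := by rfl
    _ ≤ δ * |s| * |s| := this
    _ = δ * s^2 := by rw [mul_assoc, ← abs_mul, ← sq, abs_of_nonneg (sq_nonneg s)]

set_option maxHeartbeats 1000000 in
theorem stmt10 {α : Type*} [MeasurableSpace α] (μ : Measure α) [IsProbabilityMeasure μ]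
    (Γ : (α → ℝ) → α → ℝ) (ψ : ℝ → ℝ) (Cψ : ℝ)
    (hψC2 : ContDiff ℝ 2 ψ) (hψ1 : ψ 1 = 0) (hψ'' : 0 < deriv (deriv ψ) 1)
    (hΓscale : ∀ (g : α → ℝ) (ε : ℝ),
      (Γ (fun x => 1 + ε * g x)) = fun x => ε^2 * Γ g x)
    (hΓpos : ∀ g x, 0 ≤ Γ g x)
    (hIψ : ∀ h : α → ℝ, Measurable h → (∀ x, 0 ≤ h x) → (∃ M, ∀ x, h x ≤ M) →
      (∫ x, h x ∂μ) = 1 →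
      ∫ x, ψ (h x) ∂μ ≤ Cψ * ∫ x, deriv (deriv ψ) (h x) * Γ h x ∂μ) :
    ∀ g : α → ℝ, Measurable g → (∃ M, ∀ x, |g x| ≤ M) → Integrable (Γ g) μ →
      (∫ x, g x ∂μ) = 0 →
      ∫ x, (g x)^2 ∂μ ≤ 2 * Cψ * ∫ x, Γ g x ∂μ := by
  intro g hgm ⟨M, hM⟩ hΓint hg0
  set c := deriv (deriv ψ) 1 with hc
  set M' := max M 1 with hM'
  have hM'1 : (1:ℝ) ≤ M' := le_max_right M 1
  have hM'0 : (0:ℝ) < M' := lt_of_lt_of_le one_pos hM'1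
  have hgM' : ∀ x, |g x| ≤ M' := fun x => (hM x).trans (le_max_left M 1)
  -- integrabilities
  have hgint : Integrable g μ := by
    refine (integrable_const M').mono' hgm.aestronglyMeasurable ?_
    filter_upwards with x; simpa using hgM' x
  have hg2m : Measurable (fun x => (g x)^2) := hgm.pow_const 2
  have hg2M : ∀ x, (g x)^2 ≤ M'^2 := by
    intro x
    calc (g x)^2 = |g x|^2 := (sq_abs _).symm
      _ ≤ M'^2 := by nlinarith [abs_nonneg (g x), hgM' x]
  have hg2int : Integrable (fun x => (g x)^2) μ := by
    refine (integrable_const (M'^2)).mono' hg2m.aestronglyMeasurable ?_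
    filter_upwards with x
    rw [Real.norm_eq_abs, abs_of_nonneg (sq_nonneg _)]
    exact hg2M x
  set A := ∫ x, (g x)^2 ∂μ with hA
  set B := ∫ x, Γ g x ∂μ with hB
  have hA0 : 0 ≤ A := integral_nonneg fun x => sq_nonneg _
  have hAM : A ≤ M'^2 := by
    calc A ≤ ∫ _x, M'^2 ∂μ := by
          exact integral_mono hg2int (integrable_const _) fun x => hg2M x
      _ = M'^2 := by simp
  have hB0 : 0 ≤ B := integral_nonneg fun x => hΓpos g x
  -- main claim: ∀ δ > 0, c/2*A ≤ Cψ*c*B + δ*(M'^2 + |Cψ| * B)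
  have claim : ∀ δ : ℝ, 0 < δ → c/2*A ≤ Cψ*c*B + δ*(M'^2 + |Cψ| * B) := by
    intro δ hδ
    obtain ⟨η, hη, htay⟩ := taylor_est ψ hψC2 hδ
    set ε := min η 1 / M' with hε
    have hε0 : 0 < ε := by positivity
    have hεg : ∀ x, |ε * g x| ≤ min η 1 := by
      intro x
      rw [abs_mul, abs_of_nonneg hε0.le]
      calc ε * |g x| ≤ ε * M' := by nlinarith [hgM' x]
        _ = min η 1 := by rw [hε]; exact div_mul_cancel₀ _ hM'0.ne'
    have hεgη : ∀ x, |ε * g x| ≤ η := fun x => (hεg x).trans (min_le_left _ _)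
    have hεg1 : ∀ x, |ε * g x| ≤ 1 := fun x => (hεg x).trans (min_le_right _ _)
    set h : α → ℝ := fun x => 1 + ε * g x with hh
    have hhm : Measurable h := measurable_const.add (hgm.const_mul ε)
    have hhpos : ∀ x, 0 ≤ h x := by
      intro x; have := abs_le.mp (hεg1 x); simp [h]; linarith
    have hhbd : ∀ x, h x ≤ 2 := by
      intro x; have := abs_le.mp (hεg1 x); simp [h]; linarith
    have hhint1 : (∫ x, h x ∂μ) = 1 := by
      rw [hh]
      rw [integral_add (integrable_const 1) (hgint.const_mul ε)]
      simp [integral_const_mul, hg0]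
    have key := hIψ h hhm hhpos ⟨2, hhbd⟩ hhint1
    rw [hΓscale g ε] at key
    -- integrability facts
    have hψcont : Continuous ψ := hψC2.continuous
    have h2 : ContDiff ℝ (1+1) ψ := by norm_num; exact hψC2
    have hder : ContDiff ℝ 1 (deriv ψ) := (contDiff_succ_iff_deriv.mp h2).2.2
    have hc2 : Continuous (deriv (deriv ψ)) := hder.continuous_deriv le_rfl
    have hψhm : Measurable (fun x => ψ (h x)) := hψcont.measurable.comp hhm
    -- lower bound for LHS
    have hlow : ∀ x, deriv ψ 1 * (ε * g x) + (c/2 - δ) * (ε * g x)^2 ≤ ψ (h x) := by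
      intro x
      have := (htay (ε * g x) (hεgη x)).1
      have habs := abs_le.mp this
      simp only [hψ1] at habs
      have : ψ (1 + ε * g x) ≥ deriv ψ 1 * (ε * g x) + c * (ε * g x)^2 / 2 - δ * (ε * g x)^2 := by
        linarith [habs.1]
      simp only [h]
      linarith
    have hLint : Integrable (fun x => deriv ψ 1 * (ε * g x) + (c/2 - δ) * (ε * g x)^2) μ := by
      apply Integrable.add
      · exact (hgint.const_mul ε).const_mul (deriv ψ 1)
      · have : (fun x => (c/2 - δ) * (ε * g x)^2) = fun x => ((c/2 - δ) * ε^2) * (g x)^2 := by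
          ext x; ring
        rw [this]
        exact hg2int.const_mul _
    have hψhint : Integrable (fun x => ψ (h x)) μ := by
      obtain ⟨Bψ, hBψ⟩ := (isCompact_Icc (a := (0:ℝ)) (b := 2)).exists_bound_of_continuousOn
        hψcont.continuousOn
      refine (integrable_const Bψ).mono' hψhm.aestronglyMeasurable ?_
      filter_upwards with x
      exact hBψ (h x) ⟨hhpos x, hhbd x⟩
    have hLeq : ∫ x, (deriv ψ 1 * (ε * g x) + (c/2 - δ) * (ε * g x)^2) ∂μ
        = (c/2 - δ) * ε^2 * A := by
      have hre : (fun x => deriv ψ 1 * (ε * g x) + (c/2 - δ) * (ε * g x)^2)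
          = fun x => (deriv ψ 1 * ε) * g x + ((c/2 - δ) * ε^2) * ((g x)^2) := by
        ext x; ring
      rw [hre, integral_add ((hgint.const_mul _)) (hg2int.const_mul _),
        integral_const_mul, integral_const_mul, hg0, hA]
      ring
    have hLHS : (c/2 - δ) * ε^2 * A ≤ ∫ x, ψ (h x) ∂μ := by
      rw [← hLeq]
      exact integral_mono hLint hψhint hlow
    -- upper bound for RHS
    have hψ''hint : Integrable (fun x => deriv (deriv ψ) (h x) * Γ g x) μ := by
      obtain ⟨B2, hB2⟩ := (isCompact_Icc (a := (0:ℝ)) (b := 2)).exists_bound_of_continuousOn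
        hc2.continuousOn
      apply hΓint.bdd_mul ((hc2.measurable.comp hhm).aestronglyMeasurable)
      exact Filter.Eventually.of_forall fun x => show ‖(deriv (deriv ψ) ∘ h) x‖ ≤ B2 from hB2 (h x) ⟨hhpos x, hhbd x⟩
    have hX : |(∫ x, deriv (deriv ψ) (h x) * Γ g x ∂μ) - c * B| ≤ δ * B := by
      have heq : (∫ x, deriv (deriv ψ) (h x) * Γ g x ∂μ) - c * B
          = ∫ x, (deriv (deriv ψ) (h x) - c) * Γ g x ∂μ := by
        rw [hB, ← integral_const_mul]
        rw [← integral_sub hψ''hint (hΓint.const_mul c)]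
        congr 1; ext x; ring
      rw [heq]
      have habs' : Integrable (fun x => |deriv (deriv ψ) (h x) - c| * |Γ g x|) μ := by
        have h1 := (hψ''hint.sub (hΓint.const_mul c)).abs
        refine h1.congr (Filter.Eventually.of_forall fun x => ?_)
        simp only [Pi.sub_apply]
        rw [← abs_mul, sub_mul]
      calc |∫ x, (deriv (deriv ψ) (h x) - c) * Γ g x ∂μ|
          ≤ ∫ x, |deriv (deriv ψ) (h x) - c| * |Γ g x| ∂μ := by
            simpa [Real.norm_eq_abs, abs_mul] using
              norm_integral_le_integral_norm (μ := μ)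
                (fun x => (deriv (deriv ψ) (h x) - c) * Γ g x)
        _ ≤ ∫ x, δ * Γ g x ∂μ := by
            refine integral_mono habs' (hΓint.const_mul δ) ?_
            intro x
            show |deriv (deriv ψ) (h x) - c| * |Γ g x| ≤ δ * Γ g x
            rw [abs_of_nonneg (hΓpos g x)]
            have h2 : |deriv (deriv ψ) (h x) - c| ≤ δ := by
              simpa [h, hc] using (htay (ε * g x) (hεgη x)).2
            nlinarith [hΓpos g x, abs_nonneg (deriv (deriv ψ) (h x) - c)]
        _ = δ * B := by rw [integral_const_mul, hB]
    -- combine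
    have hRHS : Cψ * ∫ x, deriv (deriv ψ) (h x) * (ε^2 * Γ g x) ∂μ
        ≤ ε^2 * (Cψ * c * B + |Cψ| * (δ * B)) := by
      have heq2 : (∫ x, deriv (deriv ψ) (h x) * (ε^2 * Γ g x) ∂μ)
          = ε^2 * ∫ x, deriv (deriv ψ) (h x) * Γ g x ∂μ := by
        rw [← integral_const_mul]
        congr 1; ext x; ring
      rw [heq2]
      set X := ∫ x, deriv (deriv ψ) (h x) * Γ g x ∂μ
      have h1 : Cψ * X = Cψ * c * B + Cψ * (X - c * B) := by ring
      have h2 : Cψ * (X - c * B) ≤ |Cψ| * (δ * B) := by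
        calc Cψ * (X - c * B) ≤ |Cψ * (X - c * B)| := le_abs_self _
          _ = |Cψ| * |X - c * B| := abs_mul _ _
          _ ≤ |Cψ| * (δ * B) := by nlinarith [abs_nonneg Cψ, hX]
      nlinarith [sq_nonneg ε, hε0]
    have hchain : (c/2 - δ) * ε^2 * A ≤ ε^2 * (Cψ * c * B + |Cψ| * (δ * B)) :=
      le_trans hLHS (le_trans key hRHS)
    have hdiv : (c/2 - δ) * A ≤ Cψ * c * B + |Cψ| * (δ * B) := by
      have hε2 : 0 < ε^2 := by positivity
      nlinarith [hchain]
    nlinarith [abs_nonneg Cψ, hδ.le, hAM, hB0]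
  -- conclude from claim
  have hfinal : c/2*A ≤ Cψ*c*B := by
    have hK : (0:ℝ) < M'^2 + |Cψ| * B := by nlinarith [abs_nonneg Cψ, hB0]
    by_contra hcon
    push_neg at hcon
    set d := (c/2*A - Cψ*c*B) / (2*(M'^2 + |Cψ| * B)) with hd
    have hd0 : 0 < d := div_pos (by linarith) (by positivity)
    have hcl := claim d hd0
    have h2 : d * (M'^2 + |Cψ| * B) = (c/2*A - Cψ*c*B)/2 := by
      rw [hd]
      field_simp
    linarith
  -- divide by c
  nlinarith [hψ'', hfinal, hA0, hB0]
end

section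
/- Let η : [0,∞) → ℝ be C² with η'' > 0 and η'' non-increasing on [b,∞), and η(u)/u → ∞ at infinity. Fix a > max(2,b) and define ψ''(u) = η''(u)/η''(a) for u ≥ a and ψ''(u) = 1 for u < a, ψ'(u) = ∫_{1/2}^u ψ''(v)dv, ψ(u) = ∫_1^u ψ'(v)dv. Then ψ(u) = (u² - u)/2 for u ≤ a, ψ ≤ 0 on [0,1], and there exist constants c₁, c₂ > 0 and u₀ such that (1/(2η''(a)))·η(u) ≤ ψ(u) ≤ c₂·η(u) for all u ≥ u₀. -/
open Real Filter Set

theorem stmt11 (η : ℝ → ℝ) (b a : ℝ)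
    (hη : ContDiff ℝ 2 η)
    (hη'' : ∀ u ≥ b, 0 < deriv (deriv η) u)
    (hmono : AntitoneOn (deriv (deriv η)) (Set.Ici b))
    (hsup : Tendsto (fun u => η u / u) atTop atTop)
    (ha : max 2 b < a)
    (ψ2 ψ1 ψ : ℝ → ℝ)
    (hψ2 : ∀ u, ψ2 u = if a ≤ u then deriv (deriv η) u / deriv (deriv η) a else 1)
    (hψ1 : ∀ u, ψ1 u = ∫ v in (1/2:ℝ)..u, ψ2 v)
    (hψ : ∀ u, ψ u = ∫ v in (1:ℝ)..u, ψ1 v) :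
    (∀ u ≤ a, ψ u = (u^2 - u)/2) ∧
    (∀ u ∈ Set.Icc (0:ℝ) 1, ψ u ≤ 0) ∧
    ∃ c2 > (0:ℝ), ∃ u0 : ℝ, ∀ u ≥ u0,
      (1 / (2 * deriv (deriv η) a)) * η u ≤ ψ u ∧ ψ u ≤ c2 * η u := by
  have hab : b < a := lt_of_le_of_lt (le_max_right 2 b) ha
  have ha2 : (2:ℝ) < a := lt_of_le_of_lt (le_max_left 2 b) ha
  set K := deriv (deriv η) a with hKdef
  have hK : (0:ℝ) < K := hη'' a hab.le
  have hKne : K ≠ 0 := ne_of_gt hK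
  -- regularity
  have hη2 : ContDiff ℝ (1+1) η := by
    have : ((2:ℕ∞) : WithTop ℕ∞) = 1 + 1 := by norm_num
    exact this ▸ hη
  have hd1 : ContDiff ℝ 1 (deriv η) := (contDiff_succ_iff_deriv.mp hη2).2.2
  have hdiffη : Differentiable ℝ η := (contDiff_succ_iff_deriv.mp hη2).1
  have hdiff1 : Differentiable ℝ (deriv η) := hd1.differentiable one_ne_zero
  have hcont2 : Continuous (deriv (deriv η)) := hd1.continuous_deriv le_rfl
  have hcont1 : Continuous (deriv η) := hd1.continuous
  -- ψ2 facts
  have hψ2eq : ψ2 = fun u => if a ≤ u then deriv (deriv η) u / K else 1 := funext hψ2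
  have hψ2cont : Continuous ψ2 := by
    rw [hψ2eq]
    exact Continuous.if_le (hcont2.div_const K) continuous_const continuous_const
      continuous_id (fun x hx => by rw [← hx]; exact div_self hKne)
  have hψ2low : ∀ v ≤ a, ψ2 v = 1 := by
    intro v hv
    rw [hψ2]
    split_ifs with h
    · rw [le_antisymm hv h]; exact div_self hKne
    · rfl
  -- ψ1 for u ≤ a
  have hψ1low : ∀ u ≤ a, ψ1 u = u - 1/2 := by
    intro u hu
    rw [hψ1, intervalIntegral.integral_congr (g := fun _ => (1:ℝ))
      (fun v hv => hψ2low v (le_trans hv.2 (sup_le (by linarith) hu)))]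
    simp
  -- ψ for u ≤ a
  have hψlow : ∀ u ≤ a, ψ u = (u^2 - u)/2 := by
    intro u hu
    rw [hψ, intervalIntegral.integral_congr (g := fun v => v - 1/2)
      (fun v hv => hψ1low v (le_trans hv.2 (sup_le (by linarith) hu)))]
    have hsub : ∫ x in (1:ℝ)..u, (x - 1/2) =
        (∫ x in (1:ℝ)..u, x) - ∫ _x in (1:ℝ)..u, (1/2:ℝ) :=
      intervalIntegral.integral_sub (continuous_id.intervalIntegrable _ _)
        intervalIntegrable_const
    rw [hsub]
    simp
    ring
  refine ⟨hψlow, ?_, ?_⟩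
  · intro u hu
    rw [hψlow u (by linarith [hu.2])]
    nlinarith [mul_nonneg hu.1 (sub_nonneg.mpr hu.2)]
  -- Part 3
  · -- ψ1 for u ≥ a
    have hψ1high : ∀ u, a ≤ u → ψ1 u = (a - 1/2) + (deriv η u - deriv η a)/K := by
      intro u hu
      rw [hψ1]
      rw [← intervalIntegral.integral_add_adjacent_intervals
        (hψ2cont.intervalIntegrable (1/2) a) (hψ2cont.intervalIntegrable a u)]
      have h1 : ∫ v in (1/2:ℝ)..a, ψ2 v = a - 1/2 := by
        rw [← hψ1]; exact hψ1low a le_rfl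
      have h2 : ∫ v in a..u, ψ2 v = (deriv η u - deriv η a)/K := by
        rw [intervalIntegral.integral_congr (g := fun v => deriv (deriv η) v / K)
          (fun v hv => by
            rw [Set.uIcc_of_le hu] at hv
            rw [hψ2, if_pos hv.1])]
        rw [intervalIntegral.integral_div,
          intervalIntegral.integral_deriv_eq_sub (fun x _ => hdiff1 x)
            (hcont2.intervalIntegrable _ _)]
      rw [h1, h2]
    -- ψ1 continuous
    have hψ1cont : Continuous ψ1 := by
      have : ψ1 = fun u => ∫ v in (1/2:ℝ)..u, ψ2 v := funext hψ1
      rw [this]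
      exact intervalIntegral.continuous_primitive
        (fun c d => hψ2cont.intervalIntegrable c d) _
    -- ψ for u ≥ a
    set β := (a - 1/2) - deriv η a / K with hβ
    set γ := (a^2-a)/2 - (a-1/2)*a - η a / K + deriv η a * a / K with hγ
    have hψhigh : ∀ u, a ≤ u → ψ u = η u / K + β * u + γ := by
      intro u hu
      rw [hψ]
      rw [← intervalIntegral.integral_add_adjacent_intervals
        (hψ1cont.intervalIntegrable 1 a) (hψ1cont.intervalIntegrable a u)]
      have h1 : ∫ v in (1:ℝ)..a, ψ1 v = (a^2 - a)/2 := by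
        rw [← hψ]; exact hψlow a le_rfl
      have h2 : ∫ v in a..u, ψ1 v
          = (u - a) * (a - 1/2) + ((η u - η a) - (u - a) * deriv η a)/K := by
        rw [intervalIntegral.integral_congr
          (g := fun v => (a - 1/2) + (deriv η v - deriv η a)/K)
          (fun v hv => by
            rw [Set.uIcc_of_le hu] at hv
            exact hψ1high v hv.1)]
        rw [intervalIntegral.integral_add (g := fun x => (deriv η x - deriv η a) / K) intervalIntegrable_const
          (((hcont1.sub continuous_const).div_const K).intervalIntegrable _ _)]
        rw [intervalIntegral.integral_div,
          intervalIntegral.integral_sub (hcont1.intervalIntegrable _ _)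
            intervalIntegrable_const,
          intervalIntegral.integral_deriv_eq_sub (fun x _ => hdiffη x)
            (hcont1.intervalIntegrable _ _),
          intervalIntegral.integral_const, intervalIntegral.integral_const]
        simp only [smul_eq_mul]
      rw [h1, h2, hβ, hγ]
      field_simp
      ring
    refine ⟨2/K, by positivity, ?_⟩
    obtain ⟨u1, hu1⟩ := (Filter.eventually_atTop.mp
      (Filter.tendsto_atTop.mp hsup (2*K*(|β|+|γ|))))
    refine ⟨max u1 (max a 1), fun u hu => ?_⟩
    have hua : a ≤ u := le_trans (le_trans (le_max_left a 1) (le_max_right u1 _)) hu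
    have hu1' : (1:ℝ) ≤ u := le_trans (le_trans (le_max_right a 1) (le_max_right u1 _)) hu
    have hupos : (0:ℝ) < u := by linarith
    have hC : 2*K*(|β|+|γ|)*u ≤ η u := by
      have := hu1 u (le_trans (le_max_left u1 _) hu)
      calc 2*K*(|β|+|γ|)*u ≤ (η u / u) * u := by
            exact mul_le_mul_of_nonneg_right this hupos.le
        _ = η u := by field_simp
    rw [hψhigh u hua]
    have habs1 : -|β| ≤ β := neg_abs_le β
    have habs2 : -|γ| ≤ γ := neg_abs_le γ
    have habs3 : β ≤ |β| := le_abs_self β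
    have habs4 : γ ≤ |γ| := le_abs_self γ
    have hb0 : (0:ℝ) ≤ |β| := abs_nonneg β
    have hg0 : (0:ℝ) ≤ |γ| := abs_nonneg γ
    constructor
    · have key : 0 ≤ η u + 2*K*(β*u + γ) := by
        nlinarith [mul_nonneg (mul_nonneg hK.le hupos.le) (by linarith : (0:ℝ) ≤ |β| + β),
          mul_nonneg hK.le (by linarith : (0:ℝ) ≤ |γ| + γ),
          mul_nonneg (mul_nonneg hK.le (by linarith : (0:ℝ) ≤ u - 1)) hg0]
      have hdiff : η u / K + β * u + γ - 1/(2*K) * η u = (η u + 2*K*(β*u+γ)) / (2*K) := by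
        field_simp
        ring
      have : 0 ≤ η u / K + β * u + γ - 1/(2*K) * η u := by
        rw [hdiff]
        exact div_nonneg key (by linarith)
      linarith
    · have key : K*(β*u + γ) ≤ η u := by
        nlinarith [mul_nonneg (mul_nonneg hK.le hupos.le) (by linarith : (0:ℝ) ≤ |β| - β),
          mul_nonneg hK.le (by linarith : (0:ℝ) ≤ |γ| - γ),
          mul_nonneg (mul_nonneg hK.le (by linarith : (0:ℝ) ≤ u - 1)) hg0,
          mul_nonneg (mul_nonneg (mul_nonneg hK.le (by linarith : (0:ℝ) ≤ |β| + |γ|)) hupos.le) (by norm_num : (0:ℝ) ≤ 1)]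
      have hdiff : 2/K * η u - (η u / K + β * u + γ) = (η u - K*(β*u+γ)) / K := by
        field_simp
        ring
      have : 0 ≤ 2/K * η u - (η u / K + β * u + γ) := by
        rw [hdiff]
        exact div_nonneg (by linarith) hK.le
      linarith
end

section
/- Let μ be a probability measure with no atoms relative to capacity, satisfying: there exists β > 0 such that for all u in the Dirichlet domain with essential infimum 0, ∫u² dμ ≤ β∫Γ(u)dμ. Then for every set A with 0 < μ(A) < 1/2, Cap_μ(A) ≥ 1/(2β), where Cap_μ(A) = inf{∫Γ(f)dμ : 1_A ≤ f ≤ 1_Ω for some Ω ⊇ A with μ(Ω) ≤ 1/2}. -/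
open Real MeasureTheory

theorem stmt13 {α : Type*} [MeasurableSpace α] (μ : Measure α) [IsProbabilityMeasure μ]
    (Γ : (α → ℝ) → α → ℝ) (β : ℝ) (hβ : 0 < β)
    (hΓsym : ∀ f : α → ℝ, Γ (fun x => 1 - f x) = Γ f)
    (hβineq : ∀ u : α → ℝ, Measurable u → (∀ x, 0 ≤ u x) → essInf u μ = 0 →
      ∫ x, (u x)^2 ∂μ ≤ β * ∫ x, Γ u x ∂μ)
    (A Ω : Set α) (hA : MeasurableSet A) (hApos : 0 < μ A) (hAhalf : μ A < 1/2)
    (hAΩ : A ⊆ Ω) (hΩmeas : MeasurableSet Ω) (hΩ : μ Ω ≤ 1/2)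
    (f : α → ℝ) (hf : Measurable f)
    (hf1 : ∀ x, A.indicator (fun _ => (1:ℝ)) x ≤ f x)
    (hf2 : ∀ x, f x ≤ Ω.indicator (fun _ => (1:ℝ)) x) :
    1 / (2 * β) ≤ ∫ x, Γ f x ∂μ := by
  set u : α → ℝ := fun x => 1 - f x with hu
  have hf_nonneg : ∀ x, 0 ≤ f x := fun x =>
    le_trans (Set.indicator_nonneg (fun _ _ => zero_le_one) x) (hf1 x)
  have hf_le_one : ∀ x, f x ≤ 1 := fun x =>
    le_trans (hf2 x) (Set.indicator_le_self' (fun _ _ => zero_le_one) x)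
  have hu_meas : Measurable u := measurable_const.sub hf
  have hu_nonneg : ∀ x, 0 ≤ u x := fun x => by simp [hu, hf_le_one x]
  have hu_le_one : ∀ x, u x ≤ 1 := fun x => by simp [hu, hf_nonneg x]
  -- u = 0 on A
  have huA : ∀ x ∈ A, u x = 0 := by
    intro x hx
    have h1 : (1:ℝ) ≤ f x := by simpa [Set.indicator_of_mem hx] using hf1 x
    have : f x = 1 := le_antisymm (hf_le_one x) h1
    simp [hu, this]
  -- essInf u = 0
  have hbdd : Filter.IsBoundedUnder (· ≥ ·) (ae μ) u :=
    Filter.isBoundedUnder_of ⟨0, fun x => hu_nonneg x⟩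
  have hcb : Filter.IsCoboundedUnder (· ≥ ·) (ae μ) u :=
    (Filter.isBoundedUnder_of ⟨1, fun x => hu_le_one x⟩ :
      Filter.IsBoundedUnder (· ≤ ·) (ae μ) u).isCoboundedUnder_ge
  have h_essInf_ge : (0:ℝ) ≤ essInf u μ :=
    Filter.le_liminf_of_le hcb (Filter.Eventually.of_forall hu_nonneg)
  have h_essInf_le : essInf u μ ≤ 0 := by
    by_contra h
    push_neg at h
    have hae := ae_lt_of_lt_essInf (μ := μ) (x := (0:ℝ)) h hbdd
    have : μ A = 0 := by
      refine measure_mono_null ?_ (by simpa [ae_iff] using hae)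
      intro x hx
      simp [huA x hx]
    exact absurd this hApos.ne'
  have h_essInf : essInf u μ = 0 := le_antisymm h_essInf_le h_essInf_ge
  -- ∫ u² ≥ μ Ωᶜ ≥ 1/2
  have hu_one : ∀ x ∈ Ωᶜ, u x = 1 := by
    intro x hx
    have h2 : f x ≤ 0 := by simpa [Set.indicator_of_notMem hx] using hf2 x
    have : f x = 0 := le_antisymm h2 (hf_nonneg x)
    simp [hu, this]
  have hint : Integrable (fun x => (u x)^2) μ := by
    apply Integrable.mono' (integrable_const (1:ℝ)) ((hu_meas.pow_const 2).aestronglyMeasurable)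
    refine Filter.Eventually.of_forall fun x => ?_
    rw [Real.norm_eq_abs, abs_of_nonneg (sq_nonneg (u x))]
    calc (u x)^2 ≤ 1^2 := by
          apply pow_le_pow_left₀ (hu_nonneg x) (hu_le_one x)
      _ = 1 := one_pow 2
  have hμΩc : (1:ℝ)/2 ≤ (μ Ωᶜ).toReal := by
    have h1 : μ Ωᶜ = 1 - μ Ω := by
      rw [measure_compl hΩmeas (measure_ne_top μ Ω), measure_univ]
    have h2 : (1:ENNReal)/2 ≤ μ Ωᶜ := by
      rw [h1]
      calc (1:ENNReal)/2 = 1 - 1/2 := by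
            rw [ENNReal.sub_half ENNReal.one_ne_top]
        _ ≤ 1 - μ Ω := tsub_le_tsub_left hΩ 1
    have := ENNReal.toReal_mono (measure_ne_top μ Ωᶜ) h2
    simpa using this
  have hsq : (1:ℝ)/2 ≤ ∫ x, (u x)^2 ∂μ := by
    have hineq : ∀ x, Ωᶜ.indicator (fun _ => (1:ℝ)) x ≤ (u x)^2 := by
      intro x
      by_cases hx : x ∈ Ωᶜ
      · rw [Set.indicator_of_mem hx, hu_one x hx]; norm_num
      · rw [Set.indicator_of_notMem hx]; exact sq_nonneg _
    have hintind : Integrable (Ωᶜ.indicator (fun _ => (1:ℝ))) μ :=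
      (integrable_const (1:ℝ)).indicator hΩmeas.compl
    calc (1:ℝ)/2 ≤ (μ Ωᶜ).toReal := hμΩc
      _ = ∫ x, Ωᶜ.indicator (fun _ => (1:ℝ)) x ∂μ := by
          rw [integral_indicator_const _ hΩmeas.compl]; simp; rfl
      _ ≤ ∫ x, (u x)^2 ∂μ := integral_mono hintind hint hineq
  have hmain := hβineq u hu_meas hu_nonneg h_essInf
  rw [hu, hΓsym f] at hmain
  have h12 : (1:ℝ)/2 ≤ β * ∫ x, Γ f x ∂μ := le_trans hsq hmain
  rw [div_le_iff₀ (by positivity), mul_comm]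
  linarith [h12]
end

section
/- Suppose a probability measure μ satisfies the inequality (∫f⁴dμ)^{1/2} - ∫f²dμ ≤ β_H(s)∫Γ(f)dμ + s·Osc(f²) for all s > 0 and all nice f. Then for every measurable A with 0 < μ(A) < 1/2, Cap_μ(A) ≥ ((√2-1)/(2√2)) · μ(A)^{1/2} / β_H(((√2-1)/(2√2))·μ(A)^{1/2}). -/
open Real MeasureTheory

theorem stmt14 {α : Type*} [MeasurableSpace α] (μ : Measure α) [IsProbabilityMeasure μ]
    (Γ : (α → ℝ) → α → ℝ) (βH : ℝ → ℝ)
    (hβpos : ∀ s > (0:ℝ), 0 < βH s)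
    (hβmono : ∀ s1 s2 : ℝ, 0 < s1 → s1 ≤ s2 → βH s2 ≤ βH s1)
    (hH : ∀ s > (0:ℝ), ∀ f : α → ℝ, Measurable f →
      Real.sqrt (∫ x, (f x)^4 ∂μ) - (∫ x, (f x)^2 ∂μ) ≤
        βH s * (∫ x, Γ f x ∂μ) +
          s * (essSup (fun x => (f x)^2) μ - essInf (fun x => (f x)^2) μ)) :
    ∀ (A Ω : Set α) (f : α → ℝ), MeasurableSet A → 0 < μ A → μ A < 1/2 →
      A ⊆ Ω → MeasurableSet Ω → μ Ω ≤ 1/2 → Measurable f →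
      (∀ x, A.indicator (fun _ => (1:ℝ)) x ≤ f x) →
      (∀ x, f x ≤ Ω.indicator (fun _ => (1:ℝ)) x) →
      ((Real.sqrt 2 - 1) / (2 * Real.sqrt 2)) * Real.sqrt ((μ A).toReal) /
          βH (((Real.sqrt 2 - 1) / (2 * Real.sqrt 2)) * Real.sqrt ((μ A).toReal)) ≤
        ∫ x, Γ f x ∂μ := by
  intro A Ω f hA hA0 hA2 hAΩ hΩ hΩ2 hf hfl hfu
  have hs2 : (1:ℝ) < Real.sqrt 2 := by
    rw [show (1:ℝ) = Real.sqrt 1 by simp]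
    exact Real.sqrt_lt_sqrt (by norm_num) (by norm_num)
  have hs2sq : Real.sqrt 2 * Real.sqrt 2 = 2 := Real.mul_self_sqrt (by norm_num)
  -- basic bounds on f
  have hf0 : ∀ x, 0 ≤ f x := fun x =>
    le_trans (Set.indicator_nonneg (fun _ _ => zero_le_one) x) (hfl x)
  have hf1 : ∀ x, f x ≤ 1 := fun x => by
    refine (hfu x).trans ?_
    by_cases h : x ∈ Ω <;> simp [Set.indicator, h]
  -- μ A as a real
  have hAfin : μ A < ⊤ := hA2.trans (by norm_num)
  have hμA : 0 < (μ A).toReal := ENNReal.toReal_pos hA0.ne' hAfin.ne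
  set c : ℝ := ((Real.sqrt 2 - 1) / (2 * Real.sqrt 2)) * Real.sqrt ((μ A).toReal) with hc_def
  have hc : 0 < c := by
    apply mul_pos (div_pos (by linarith) (by linarith)) (Real.sqrt_pos.2 hμA)
  -- integrability
  have hif2 : Integrable (fun x => (f x)^2) μ := by
    refine (integrable_const (1:ℝ)).mono' ((hf.pow_const 2).aestronglyMeasurable)
      (ae_of_all _ fun x => ?_)
    rw [Real.norm_eq_abs, abs_of_nonneg (by positivity)]
    exact pow_le_one₀ (hf0 x) (hf1 x)
  have hif4 : Integrable (fun x => (f x)^4) μ := by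
    refine (integrable_const (1:ℝ)).mono' ((hf.pow_const 4).aestronglyMeasurable)
      (ae_of_all _ fun x => ?_)
    rw [Real.norm_eq_abs, abs_of_nonneg (by positivity)]
    exact pow_le_one₀ (hf0 x) (hf1 x)
  set I : ℝ := ∫ x, (f x)^4 ∂μ with hI_def
  set J : ℝ := ∫ x, (f x)^2 ∂μ with hJ_def
  -- I ≥ μ A
  have hIA : (μ A).toReal ≤ I := by
    have h1 : ∫ x, A.indicator (fun _ => (1:ℝ)) x ∂μ = (μ A).toReal := by
      rw [integral_indicator_const (1:ℝ) hA]; simp [Measure.real]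
    rw [← h1]
    refine integral_mono ((integrable_const (1:ℝ)).indicator hA) hif4 fun x => ?_
    by_cases h : x ∈ A
    · have := hfl x
      simp only [Set.indicator, h, if_pos] at this ⊢
      calc (1:ℝ) = 1^4 := by norm_num
        _ ≤ (f x)^4 := by
            apply pow_le_pow_left₀ (by norm_num) (by simpa [Set.indicator, h] using hfl x)
    · simp only [Set.indicator, h, if_neg, if_false]
      positivity
  have hI0 : 0 < I := lt_of_lt_of_le hμA hIA
  -- Cauchy-Schwarz via AM-GM: J ≤ √(2I)/2
  have hJI : J ≤ Real.sqrt (2*I) / 2 := by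
    set t : ℝ := Real.sqrt (2*I) with ht_def
    have ht : 0 < t := Real.sqrt_pos.2 (by linarith)
    have htt : t * t = 2 * I := Real.mul_self_sqrt (by linarith)
    have hpt : ∀ x, (f x)^2 ≤ (t * Ω.indicator (fun _ => (1:ℝ)) x + (f x)^4 / t) / 2 := by
      intro x
      by_cases h : x ∈ Ω
      · simp only [Set.indicator, h, if_pos, mul_one]
        rw [le_div_iff₀ (by norm_num : (0:ℝ) < 2), ← sub_le_iff_le_add', le_div_iff₀ ht]
        nlinarith [sq_nonneg (t - (f x)^2)]
      · have hx0 : f x = 0 := le_antisymm (by simpa [Set.indicator, h] using hfu x) (hf0 x)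
        simp [Set.indicator, h, hx0]
    have hiInd : Integrable (fun x => t * Ω.indicator (fun _ => (1:ℝ)) x) μ :=
      ((integrable_const (1:ℝ)).indicator hΩ).const_mul t
    have hiRHS : Integrable (fun x => (t * Ω.indicator (fun _ => (1:ℝ)) x + (f x)^4 / t) / 2) μ :=
      (hiInd.add (hif4.div_const t)).div_const 2
    have h2 : J ≤ ∫ x, (t * Ω.indicator (fun _ => (1:ℝ)) x + (f x)^4 / t) / 2 ∂μ :=
      integral_mono hif2 hiRHS hpt
    have h3 : ∫ x, (t * Ω.indicator (fun _ => (1:ℝ)) x + (f x)^4 / t) / 2 ∂μ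
        = (t * (μ Ω).toReal + I / t) / 2 := by
      rw [integral_div, integral_add hiInd (hif4.div_const t), integral_const_mul,
        integral_div, integral_indicator_const (1:ℝ) hΩ]
      simp [hI_def, Measure.real]
    have hΩR : (μ Ω).toReal ≤ 1/2 :=
      calc (μ Ω).toReal ≤ ((1/2 : ENNReal)).toReal := ENNReal.toReal_mono (by norm_num) hΩ2
        _ = 1/2 := by rw [ENNReal.toReal_div]; norm_num
    have hIt : I / t = t / 2 := by
      rw [div_eq_div_iff ht.ne' (by norm_num : (2:ℝ) ≠ 0)]; linarith
    rw [h3, hIt] at h2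
    calc J ≤ (t * (μ Ω).toReal + t/2)/2 := h2
      _ ≤ (t * (1/2) + t/2)/2 := by
          apply div_le_div_of_nonneg_right _ (by norm_num)
          gcongr
      _ = t / 2 := by ring
  -- oscillation bound
  have hosc : essSup (fun x => (f x)^2) μ - essInf (fun x => (f x)^2) μ ≤ 1 := by
    have hμne : (ae μ).NeBot := ae_neBot.2 (IsProbabilityMeasure.ne_zero μ)
    have hub : essSup (fun x => (f x)^2) μ ≤ 1 := by
      apply Filter.limsup_le_of_le
      · exact Filter.isCoboundedUnder_le_of_eventually_le _ (x := 0)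
          (ae_of_all _ fun x => by positivity)
      · exact ae_of_all _ fun x => pow_le_one₀ (hf0 x) (hf1 x)
    have hlb : (0:ℝ) ≤ essInf (fun x => (f x)^2) μ := by
      apply Filter.le_liminf_of_le
      · exact Filter.isCoboundedUnder_ge_of_eventually_le _ (x := 1)
          (ae_of_all _ fun x => pow_le_one₀ (hf0 x) (hf1 x))
      · exact ae_of_all _ fun x => by positivity
    linarith
  -- apply the hypothesis
  have hmain := hH c hc f hf
  rw [← hI_def, ← hJ_def] at hmain
  have hβ := hβpos c hc
  -- √I - J ≥ 2c
  have hsqI : Real.sqrt ((μ A).toReal) ≤ Real.sqrt I := Real.sqrt_le_sqrt hIA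
  have h2I : Real.sqrt (2*I) = Real.sqrt 2 * Real.sqrt I := Real.sqrt_mul (by norm_num) I
  have hlow : 2 * c ≤ Real.sqrt I - J := by
    have : Real.sqrt I - J ≥ Real.sqrt I - Real.sqrt 2 * Real.sqrt I / 2 := by
      rw [← h2I]; linarith
    have h1 : Real.sqrt I - Real.sqrt 2 * Real.sqrt I / 2
        = Real.sqrt I * ((2 - Real.sqrt 2)/2) := by ring
    have hcoef : (Real.sqrt 2 - 1) / (2 * Real.sqrt 2) = (2 - Real.sqrt 2)/4 := by
      rw [div_eq_div_iff (by positivity) (by norm_num : (4:ℝ) ≠ 0)]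
      linear_combination (2:ℝ) * hs2sq
    have h2 : 2 * c = Real.sqrt ((μ A).toReal) * ((2 - Real.sqrt 2)/2) := by
      rw [hc_def, hcoef]; ring
    rw [h2]
    have h3 : Real.sqrt ((μ A).toReal) * ((2 - Real.sqrt 2)/2)
        ≤ Real.sqrt I * ((2 - Real.sqrt 2)/2) := by
      apply mul_le_mul_of_nonneg_right hsqI
      nlinarith
    linarith [this, h1 ▸ h3]
  -- conclude
  have hG : c ≤ βH c * ∫ x, Γ f x ∂μ := by
    have hco : c * (essSup (fun x => (f x)^2) μ - essInf (fun x => (f x)^2) μ) ≤ c * 1 :=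
      mul_le_mul_of_nonneg_left hosc hc.le
    nlinarith
  rw [div_le_iff₀ hβ]
  linarith [hG]
end
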